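/- Fix a receiver ℓ of type t_ℓ. Let ν̃, ν* ∈ Δ(S) and a ∈ A_ℓ be such that A*_{t_ℓ}(ν̃) = {a} and a ∈ A*_{t_ℓ}(ν*). For ε ∈ (0,1) set ν^ε = ε^{1/2} ν̃ + (1 − ε^{1/2}) ν* ∈ Δ(S). Then the regularized strategies θ^ε_{t_ℓ,ν^ε} converge to the point mass δ_a in Δ(A_ℓ) as ε → 0⁺. -/

import Mathlib

open MeasureTheory Finset

noncomputable section

/-- Expected utility `Σ_s u(s,a) ν(s)` of action `a` under belief `ν ∈ Δ(S)`. -/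
def expUtil {S α : Type*} [Fintype S] (u : S → α → ℝ) (ν : stdSimplex ℝ S) (a : α) : ℝ :=
  ∑ s, u s a * (ν : S → ℝ) s

/-- Admissible (optimal) actions `A*(ν) = argmax_a Σ_s u(s,a) ν(s)`. -/
def admissible {S α : Type*} [Fintype S] (u : S → α → ℝ) (ν : stdSimplex ℝ S) : Set α :=
  {a | ∀ b, expUtil u ν b ≤ expUtil u ν a}

/-- The regularized (Gibbs/softmax) strategy of a receiver with utility `u`, reference
("irrational") strategy `lam` and regularization parameter `ε`, under belief `ν`. -/
def regStrategy {S α : Type*} [Fintype S] [Fintype α] (u : S → α → ℝ) (lam : α → ℝ)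
    (ε : ℝ) (ν : stdSimplex ℝ S) (a : α) : ℝ :=
  lam a * Real.exp (expUtil u ν a / ε) / ∑ b, lam b * Real.exp (expUtil u ν b / ε)

/-- The regularized sender gain
`W^ε(ν) = Σ_t η(t) Σ_s Σ_a v(s,a) ν(s) Π_ℓ θ^ε_{t_ℓ,ν}(a_ℓ)`. -/
def regSenderGain {S L : Type*} [Fintype S] [Fintype L] [DecidableEq L]
    {A T : L → Type*} [∀ l, Fintype (A l)] [∀ l, Fintype (T l)]
    (u : ∀ l, T l → S → A l → ℝ) (v : S → (∀ l, A l) → ℝ) (η : ∀ l, T l → ℝ)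
    (lam : ∀ l, A l → ℝ) (ε : ℝ) (ν : stdSimplex ℝ S) : ℝ :=
  ∑ t : ∀ l, T l, (∏ l, η l (t l)) *
    ∑ s, ∑ a : ∀ l, A l,
      v s a * (ν : S → ℝ) s * ∏ l, regStrategy (u l (t l)) (lam l) ε ν (a l)

/-
As `ε → 0⁺` the gap `Σ_s (u(s,b) − u(s,a)) ν^ε(s)` is `√ε` times the strictly negative
`ν̃`-gap plus a nonpositive `ν*`-gap, so divided by `ε` it is at most `(ν̃-gap)/√ε → −∞`.
Hence each weight `θ^ε(b)/θ^ε(a)` with `b ≠ a` tends to `0`, and normalising gives `δ_a`.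
-/

open Filter Topology

theorem tendsto_div_sum_of_tendsto_div {ι α : Type*} [Fintype α] [DecidableEq α]
    {l : Filter ι} {w : ι → α → ℝ} {a : α} (hwa : ∀ᶠ i in l, w i a ≠ 0)
    (hw : ∀ b ≠ a, Tendsto (fun i => w i b / w i a) l (𝓝 0)) :
    Tendsto (fun i b => w i b / ∑ c, w i c) l (𝓝 fun b => if b = a then 1 else 0) := by
  have hratio : ∀ b, Tendsto (fun i => w i b / w i a) l (𝓝 (if b = a then 1 else 0)) := by
    intro b
    split_ifs with hb
    · subst hb
      exact tendsto_const_nhds.congr' (hwa.mono fun i hi => (div_self hi).symm)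
    · exact hw b hb
  have hsum : Tendsto (fun i => ∑ c, w i c / w i a) l (𝓝 1) := by
    simpa using tendsto_finsetSum univ fun c _ => hratio c
  refine tendsto_pi_nhds.2 fun b => ?_
  have hlim := (hratio b).div hsum one_ne_zero
  rw [div_one] at hlim
  refine hlim.congr' (hwa.mono fun i hi => ?_)
  simp only [Pi.div_apply, ← Finset.sum_div, div_div_div_cancel_right₀ hi]

theorem tendsto_regStrategy_of_tendsto_gap_atBot {ι S α : Type*} [Fintype S] [Fintype α]
    [DecidableEq α] {u : S → α → ℝ} {lam : α → ℝ} {l : Filter ι} {ε : ι → ℝ}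
    {ν : ι → stdSimplex ℝ S} {a : α} (hlam : lam a ≠ 0)
    (hgap : ∀ b ≠ a,
      Tendsto (fun i => (expUtil u (ν i) b - expUtil u (ν i) a) / ε i) l atBot) :
    Tendsto (fun i => regStrategy u lam (ε i) (ν i)) l
      (𝓝 fun b => if b = a then 1 else 0) := by
  refine tendsto_div_sum_of_tendsto_div
    (w := fun i b => lam b * Real.exp (expUtil u (ν i) b / ε i))
    (Eventually.of_forall fun i => mul_ne_zero hlam (Real.exp_pos _).ne') fun b hb => ?_
  have hlim := (Real.tendsto_exp_atBot.comp (hgap b hb)).const_mul (lam b / lam a)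
  rw [mul_zero] at hlim
  refine hlim.congr fun i => ?_
  simp only [Function.comp_apply, sub_div, Real.exp_sub, div_mul_div_comm]

theorem expUtil_of_eq_convexComb {S α : Type*} [Fintype S] (u : S → α → ℝ)
    {ν ν₁ ν₂ : stdSimplex ℝ S} {t : ℝ}
    (hν : ∀ s, (ν : S → ℝ) s = t * (ν₁ : S → ℝ) s + (1 - t) * (ν₂ : S → ℝ) s) (c : α) :
    expUtil u ν c = t * expUtil u ν₁ c + (1 - t) * expUtil u ν₂ c := by
  simp only [expUtil, hν, Finset.mul_sum, ← Finset.sum_add_distrib]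
  exact Finset.sum_congr rfl fun s _ => by ring

theorem expUtil_lt_of_admissible_eq_singleton {S α : Type*} [Fintype S]
    {u : S → α → ℝ} {ν : stdSimplex ℝ S} {a b : α} (h : admissible u ν = {a}) (hb : b ≠ a) :
    expUtil u ν b < expUtil u ν a := by
  have hbν : b ∉ admissible u ν := by simpa [h] using hb
  have haν : a ∈ admissible u ν := h ▸ rfl
  obtain ⟨c, hc⟩ : ∃ c, expUtil u ν b < expUtil u ν c := by
    simpa [admissible] using hbν
  exact hc.trans_le (haν c)

theorem tendsto_sqrt_mix_div_atBot {x y : ℝ} (hx : x < 0) (hy : y ≤ 0) :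
    Tendsto (fun ε => (√ε * x + (1 - √ε) * y) / ε) (𝓝[>] 0) atBot := by
  have hdiv : Tendsto (fun ε : ℝ => x / √ε) (𝓝[>] 0) atBot := by
    have hinv : Tendsto (fun ε : ℝ => √ε⁻¹) (𝓝[>] 0) atTop :=
      Real.tendsto_sqrt_atTop.comp tendsto_inv_nhdsGT_zero
    simpa only [div_eq_mul_inv, Real.sqrt_inv] using (tendsto_const_mul_atBot_of_neg hx).2 hinv
  refine tendsto_atBot_mono' _ ?_ hdiv
  filter_upwards [Ioo_mem_nhdsGT one_pos] with ε ⟨hε0, hε1⟩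
  have hs1 : √ε ≤ 1 := Real.sqrt_le_one.2 hε1.le
  have hmix : (1 - √ε) * y / ε ≤ 0 :=
    div_nonpos_of_nonpos_of_nonneg (mul_nonpos_of_nonneg_of_nonpos (by linarith) hy) hε0.le
  have hsqrt : √ε * x / ε = x / √ε := by
    rw [mul_comm, mul_div_assoc, Real.sqrt_div_self, div_eq_mul_inv]
  rw [add_div, hsqrt]
  linarith

theorem reg_strategy_tendsto_forced_action_general {S : Type*} [Fintype S]
    {α : Type*} [Fintype α] [DecidableEq α]
    (u : S → α → ℝ) (lam : α → ℝ)
    (hlampos : ∀ b, 0 < lam b)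
    (νtil νstar : stdSimplex ℝ S) (a : α)
    (hforced : admissible u νtil = {a})
    (hadm : a ∈ admissible u νstar)
    (νε : ℝ → stdSimplex ℝ S)
    (hνε : ∀ ε ∈ Set.Ioo (0 : ℝ) 1, ∀ s,
      (νε ε : S → ℝ) s =
        Real.sqrt ε * (νtil : S → ℝ) s + (1 - Real.sqrt ε) * (νstar : S → ℝ) s) :
    Filter.Tendsto (fun ε => regStrategy u lam ε (νε ε))
      (nhdsWithin 0 (Set.Ioi (0 : ℝ)))
      (nhds (fun b => if b = a then (1 : ℝ) else 0)) := by
  refine tendsto_regStrategy_of_tendsto_gap_atBot (ε := id) (hlampos a).ne' fun b hb => ?_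
  have hgap := tendsto_sqrt_mix_div_atBot
    (sub_neg.2 (expUtil_lt_of_admissible_eq_singleton hforced hb)) (sub_nonpos.2 (hadm b))
  refine hgap.congr' ?_
  filter_upwards [Ioo_mem_nhdsGT one_pos] with ε hε
  simp only [id, expUtil_of_eq_convexComb u (hνε ε hε)]
  ring

/-- Let `ν̃, ν* ∈ Δ(S)` and `a` be such that `A*(ν̃) = {a}` and
`a ∈ A*(ν*)`.  For `ε ∈ (0,1)` set `ν^ε = √ε ν̃ + (1 − √ε) ν*`.  Then the regularized
strategies `θ^ε_{ν^ε}` converge to the point mass `δ_a` as `ε → 0⁺`. -/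
theorem reg_strategy_tendsto_forced_action {S : Type*} [Fintype S] [Nonempty S]
    {α : Type*} [Fintype α] [Nonempty α] [DecidableEq α]
    (u : S → α → ℝ) (lam : α → ℝ) (hlam : lam ∈ stdSimplex ℝ α)
    (hlampos : ∀ b, 0 < lam b)
    (νtil νstar : stdSimplex ℝ S) (a : α)
    (hforced : admissible u νtil = {a})
    (hadm : a ∈ admissible u νstar)
    (νε : ℝ → stdSimplex ℝ S)
    (hνε : ∀ ε ∈ Set.Ioo (0 : ℝ) 1, ∀ s,
      (νε ε : S → ℝ) s =
        Real.sqrt ε * (νtil : S → ℝ) s + (1 - Real.sqrt ε) * (νstar : S → ℝ) s) :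
    Filter.Tendsto (fun ε => regStrategy u lam ε (νε ε))
      (nhdsWithin 0 (Set.Ioi (0 : ℝ)))
      (nhds (fun b => if b = a then (1 : ℝ) else 0)) :=
  reg_strategy_tendsto_forced_action_general u lam hlampos νtil νstar a hforced hadm νε hνε

end
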